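/- Let A = (a_{ij}) be a 2n×2n multiparameter quantum matrix over R with the (p,λ)-condition and λ ≠ −1, and let B = (b_{ij}) be a 2n×2n array of elements of R with b_{ii} = 0 for all i and b_{ji} = −q_{ij} b_{ij} for all i < j, such that every entry of B commutes with every entry of A. Let C = ABAᵀ, i.e., c_{ij} = Σ_{k,l} a_{ik} b_{kl} a_{jl}. Then c_{ji} = −q_{ij} c_{ij} for all i < j, and Pf_p(C) = det_q(A) · Pf_p(B), where Pf_p is the quantum Pfaffian formed with the signs (−p)_σ. -/

import Mathlib

open Finset

noncomputable section

attribute [local instance] Classical.propDecidable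

/-- Ordered product `f 0 * f 1 * ... * f (n-1)` of noncommuting elements. -/
def ordProd {R : Type*} [Monoid R] {n : ℕ} (f : Fin n → R) : R :=
  (List.ofFn f).prod

/-- The generalized sign `(−q)_σ` with column labels `cols`:
`(−1)^{ℓ(σ)} ∏_{k<k', σ(k)>σ(k')} q_{cols(σ(k')) cols(σ(k))}`. -/
def qSign {N t : ℕ} (q : Fin N → Fin N → ℂ) (cols : Fin t → Fin N)
    (σ : Equiv.Perm (Fin t)) : ℂ :=
  ∏ ij ∈ Finset.univ.filter
      (fun ij : Fin t × Fin t => ij.1 < ij.2 ∧ σ ij.2 < σ ij.1),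
    (-(q (cols (σ ij.2)) (cols (σ ij.1))))

/-- The quantum minor `det_q(A^{rows}_{cols})`. -/
def qMinor {R : Type*} [Ring R] [Algebra ℂ R] {N t : ℕ}
    (q : Fin N → Fin N → ℂ) (rows cols : Fin t → Fin N)
    (a : Fin N → Fin N → R) : R :=
  ∑ σ : Equiv.Perm (Fin t),
    qSign q cols σ • ordProd (fun k => a (rows k) (cols (σ k)))

/-- Quantum row determinant `rdet(A) = Σ_σ (−q)_σ a_{1σ(1)} ⋯ a_{nσ(n)}`. -/
def rdet {R : Type*} [Ring R] [Algebra ℂ R] {N : ℕ}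
    (q : Fin N → Fin N → ℂ) (a : Fin N → Fin N → R) : R :=
  ∑ σ : Equiv.Perm (Fin N),
    qSign q id σ • ordProd (fun i => a i (σ i))

/-- Quantum column determinant `cdet(A) = Σ_σ (−p)_σ a_{σ(1)1} ⋯ a_{σ(n)n}`. -/
def cdet {R : Type*} [Ring R] [Algebra ℂ R] {N : ℕ}
    (p : Fin N → Fin N → ℂ) (a : Fin N → Fin N → R) : R :=
  ∑ σ : Equiv.Perm (Fin N),
    qSign p id σ • ordProd (fun i => a (σ i) i)

/-- Conditions on the parameters: they are nonzero, `p_{ii} = q_{ii} = 1`,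
and `p_{ij}p_{ji} = q_{ij}q_{ji} = 1`. -/
def ParamConds {N : ℕ} (p q : Fin N → Fin N → ℂ) : Prop :=
  (∀ i j, p i j ≠ 0 ∧ q i j ≠ 0) ∧
  (∀ i, p i i = 1 ∧ q i i = 1) ∧
  (∀ i j, p i j * p j i = 1 ∧ q i j * q j i = 1)

/-- The `(p,λ)`-condition: `p_{ij} q_{ij} = λ` for `i < j`. -/
def PLambdaCond {N : ℕ} (p q : Fin N → Fin N → ℂ) (lam : ℂ) : Prop :=
  ∀ i j : Fin N, i < j → p i j * q i j = lam

/-- `A = (a_{ij})` is a multiparameter quantum matrix for the parameters `p, q`. -/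
def IsQuantumMatrix {R : Type*} [Ring R] [Algebra ℂ R] {N : ℕ}
    (p q : Fin N → Fin N → ℂ) (a : Fin N → Fin N → R) : Prop :=
  (∀ i k l : Fin N, k < l → a i k * a i l = q k l • (a i l * a i k)) ∧
  (∀ i j k : Fin N, i < j → a i k * a j k = p i j • (a j k * a i k)) ∧
  (∀ i j k l : Fin N, i < j → k < l →
    a i k * a j l - (q k l / q i j) • (a j l * a i k)
      = q k l • (a i l * a j k) - (q i j)⁻¹ • (a j k * a i l)) ∧
  (∀ i j k l : Fin N, i < j → k < l →
    a i k * a j l - (p i j / p k l) • (a j l * a i k)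
      = p i j • (a j k * a i l) - (p k l)⁻¹ • (a i l * a j k))

/-- `x_1, …, x_n` satisfy the `q`-exterior relations. -/
def QExterior {R : Type*} [Ring R] [Algebra ℂ R] {N : ℕ}
    (q : Fin N → Fin N → ℂ) (x : Fin N → R) : Prop :=
  (∀ i, x i * x i = 0) ∧
  (∀ i j : Fin N, i < j → x j * x i = -(q i j) • (x i * x j))

/-- The quantum integer `[k]_λ = 1 + λ + ⋯ + λ^{k−1}`. -/
def qNum (lam : ℂ) (k : ℕ) : ℂ := ∑ i ∈ Finset.range k, lam ^ i

/-- The quantum factorial `[n]_λ! = [1]_λ [2]_λ ⋯ [n]_λ`. -/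
def qFact (lam : ℂ) (n : ℕ) : ℂ := ∏ k ∈ Finset.range n, qNum lam (k + 1)

/-- The index `2i−1` (1-based), i.e. position `2i` (0-based), inside `Fin (2n)`. -/
def pfIdx1 {n : ℕ} (i : Fin n) : Fin (2 * n) :=
  ⟨2 * i.1, by have := i.isLt; omega⟩

/-- The index `2i` (1-based), i.e. position `2i+1` (0-based), inside `Fin (2n)`. -/
def pfIdx2 {n : ℕ} (i : Fin n) : Fin (2 * n) :=
  ⟨2 * i.1 + 1, by have := i.isLt; omega⟩

/-- The multiparameter quantum Pfaffian
`Pf_q(B) = Σ_σ (−q)_σ b_{σ(1)σ(2)} ⋯ b_{σ(2n−1)σ(2n)}`, the sum over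
permutations `σ` of `{1,…,2n}` with `σ(2i−1) < σ(2i)` for all `i`. -/
def Pf {R : Type*} [Ring R] [Algebra ℂ R] {n : ℕ}
    (q : Fin (2 * n) → Fin (2 * n) → ℂ) (b : Fin (2 * n) → Fin (2 * n) → R) : R :=
  ∑ σ ∈ Finset.univ.filter
      (fun σ : Equiv.Perm (Fin (2 * n)) => ∀ i : Fin n, σ (pfIdx1 i) < σ (pfIdx2 i)),
    qSign q id σ • ordProd (fun i : Fin n => b (σ (pfIdx1 i)) (σ (pfIdx2 i)))

/-- Sub-Pfaffian along an index map `f` (typically the increasing enumeration of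
a subset of the indices): the parameters and the entries are restricted along `f`. -/
def PfOn {R : Type*} [Ring R] [Algebra ℂ R] {N m : ℕ}
    (q : Fin N → Fin N → ℂ) (b : Fin N → Fin N → R) (f : Fin (2 * m) → Fin N) : R :=
  Pf (fun i j => q (f i) (f j)) (fun i j => b (f i) (f j))

/-- `inv(I, J) = ∏_{i ∈ I, j ∈ J, i > j} (−q_{ji})`. -/
def invQ {N : ℕ} (q : Fin N → Fin N → ℂ) (I J : Finset (Fin N)) : ℂ :=
  ∏ i ∈ I, ∏ j ∈ J, if j < i then -(q j i) else 1

/-- The position `k·m + r` within `Fin (m·n)`, i.e. the `r`-th index of the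
`k`-th block of size `m`. -/
def blockIdx {m n : ℕ} (k : Fin n) (r : Fin m) : Fin (m * n) :=
  ⟨k.1 * m + r.1, by
    have hk : k.1 + 1 ≤ n := k.isLt
    have hr : r.1 < m := r.isLt
    calc k.1 * m + r.1 < k.1 * m + m := Nat.add_lt_add_left hr _
      _ = (k.1 + 1) * m := (Nat.succ_mul k.1 m).symm
      _ ≤ n * m := Nat.mul_le_mul hk (Nat.le_refl m)
      _ = m * n := Nat.mul_comm n m⟩

/-- The multiparameter quantum hyper-Pfaffian
`Pf_q(B) = Σ_{σ∈Π} (−q)_σ b_{σ(1)…σ(m)} ⋯ b_{σ(m(n−1)+1)…σ(mn)}`, where `Π` is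
the set of permutations of `{1,…,mn}` increasing on each consecutive block of
length `m`. -/
def hPf {R : Type*} [Ring R] [Algebra ℂ R] {m n : ℕ}
    (q : Fin (m * n) → Fin (m * n) → ℂ) (b : (Fin m → Fin (m * n)) → R) : R :=
  ∑ σ ∈ Finset.univ.filter
      (fun σ : Equiv.Perm (Fin (m * n)) =>
        ∀ k : Fin n, StrictMono (fun r : Fin m => σ (blockIdx k r))),
    qSign q id σ • ordProd (fun k : Fin n => b (fun r => σ (blockIdx k r)))

/-- The increasing enumeration of `{1,…,n} \ {k}` (the "hat" of `k`). -/
def hatIdx {n : ℕ} (k : Fin n) (r : Fin (n - 1)) : Fin n :=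
  if h : r.1 < k.1 then ⟨r.1, by have := k.isLt; omega⟩
  else ⟨r.1 + 1, by have := r.isLt; omega⟩

/-- The increasing enumeration of `{s+1,…,n}`. -/
def tailIdx {n : ℕ} (s : ℕ) (k : Fin (n - s)) : Fin n :=
  ⟨s + k.1, by have := k.isLt; omega⟩

/-- The increasing enumeration of `{1,…,t}` inside `{1,…,n}`. -/
def headIdx {n : ℕ} (t : ℕ) (ht : t ≤ n) (k : Fin t) : Fin n :=
  ⟨k.1, lt_of_lt_of_le k.isLt ht⟩

/-- `σ` is a `t`-shuffle: `σ(1) < ⋯ < σ(t)` and `σ(t+1) < ⋯ < σ(n)`. -/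
def IsShuffle {n : ℕ} (t : ℕ) (σ : Equiv.Perm (Fin n)) : Prop :=
  (∀ k l : Fin n, k < l → l.1 < t → σ k < σ l) ∧
  (∀ k l : Fin n, k < l → t ≤ k.1 → σ k < σ l)


/-!
Write `c_{uv} = Σ_{k<l} b_{kl} (a_{uk} a_{vl} - p_{uv} a_{vk} a_{ul})` for `u < v`; this uses the
`q`-antisymmetry of `B` and, through the `(p,λ)`-condition with `λ ≠ -1`, the commutation of the
antidiagonal entries of `A`. Multiplying out `Pf_p(C)`, the entries of `B` factor out of every term,
and for a fixed choice of pairs `(k_i, l_i)` the remaining sum over Pfaffian permutations is the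
column determinant `Σ_σ (-p)_σ a_{σ(1) w(1)} ⋯ a_{σ(2n) w(2n)}` of the word
`w = k_1 l_1 ⋯ k_n l_n`. Pairing `σ` with `σ ∘ (t t+1)` shows that this determinant vanishes when
`w` repeats a letter and otherwise equals `(-p)_w cdet_p(A)`. The surviving words are the
permutations, and they reassemble `Pf_p(B)`. Finally `cdet_p(A) = rdet_q(A)`: each monomial of the
row determinant is sorted into column order by commuting antidiagonal pairs.
-/

section OrderedProduct

variable {R : Type*}

theorem ordProd_succ [Monoid R] {n : ℕ} (f : Fin (n + 1) → R) :
    ordProd f = f 0 * ordProd (fun i : Fin n => f i.succ) := by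
  simp [ordProd, List.ofFn_succ]

theorem ordProd_eq_zero [MonoidWithZero R] {n : ℕ} {f : Fin n → R} (i : Fin n) (h : f i = 0) :
    ordProd f = 0 :=
  List.prod_eq_zero (List.mem_ofFn.2 ⟨i, h⟩)

theorem ordProd_smul {K : Type*} [CommMonoid K] [Monoid R] [MulAction K R]
    [IsScalarTower K R R] [SMulCommClass K R R] {n : ℕ} (z : Fin n → K) (f : Fin n → R) :
    ordProd (fun i => z i • f i) = (∏ i, z i) • ordProd f := by
  induction n with
  | zero => simp [ordProd]
  | succ n ih =>
    rw [ordProd_succ, ordProd_succ f, Fin.prod_univ_succ, ih, smul_mul_smul_comm]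

theorem commute_ordProd_right [Monoid R] {n : ℕ} {x : R} {f : Fin n → R}
    (h : ∀ i, Commute x (f i)) : Commute x (ordProd f) :=
  Commute.list_prod_right _ _ fun _ hy => by
    obtain ⟨i, rfl⟩ := List.mem_ofFn.1 hy
    exact h i

theorem ordProd_mul_distrib [Monoid R] {n : ℕ} (f g : Fin n → R)
    (h : ∀ i j, i < j → Commute (g i) (f j)) :
    ordProd (fun i => f i * g i) = ordProd f * ordProd g := by
  induction n with
  | zero => simp [ordProd]
  | succ n ih =>
    rw [ordProd_succ, ordProd_succ f, ordProd_succ g,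
      ih _ _ fun i j hij => h _ _ (Fin.succ_lt_succ_iff.2 hij)]
    have : Commute (g 0) (ordProd fun i : Fin n => f i.succ) :=
      commute_ordProd_right fun i => h 0 i.succ i.succ_pos
    rw [mul_assoc, ← mul_assoc (g 0), this.eq]
    simp only [mul_assoc]

theorem ordProd_sum [Semiring R] {ι : Type*} [Fintype ι] {n : ℕ} (F : Fin n → ι → R) :
    ordProd (fun i => ∑ e, F i e) = ∑ φ : Fin n → ι, ordProd (fun i => F i (φ i)) := by
  induction n with
  | zero => simp [ordProd]
  | succ n ih =>
    rw [ordProd_succ, ih, Finset.sum_mul_sum,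
      ← (Fin.consEquiv fun _ => ι).sum_comp, Fintype.sum_prod_type]
    simp [ordProd_succ]

theorem ordProd_add [Semiring R] {n : ℕ} (f g : Fin n → R) :
    ordProd (fun i => f i + g i)
      = ∑ E : Finset (Fin n), ordProd (fun i => if i ∈ E then g i else f i) := by
  let toFinset : (Fin n → Bool) ≃ Finset (Fin n) :=
    { toFun ε := {i | ε i}
      invFun E i := decide (i ∈ E)
      left_inv ε := by ext; simp
      right_inv E := by ext; simp }
  have hsum : ∀ i, f i + g i = ∑ e : Bool, if e then g i else f i := fun i => by
    rw [Fintype.sum_bool, if_pos rfl, if_neg Bool.false_ne_true, add_comm]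
  simp_rw [hsum, ordProd_sum, ← toFinset.sum_comp]
  simp [toFinset]

theorem ordProd_pairs [Monoid R] {n : ℕ} (f : Fin (2 * n) → R) :
    ordProd (fun i : Fin n => f (pfIdx1 i) * f (pfIdx2 i)) = ordProd f := by
  rw [ordProd, ordProd, List.ofFn_mul' f, List.prod_flatten, List.map_ofFn]
  simp [Function.comp_def, List.ofFn_succ, pfIdx1, pfIdx2]

theorem ordProd_add_smul [Semiring R] {K : Type*} [CommMonoid K] [MulAction K R]
    [IsScalarTower K R R] [SMulCommClass K R R] {n : ℕ} (f g : Fin n → R) (z : Fin n → K) :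
    ordProd (fun i => f i + z i • g i)
      = ∑ E : Finset (Fin n), (∏ i ∈ E, z i) • ordProd (fun i => if i ∈ E then g i else f i) := by
  rw [ordProd_add]
  refine Finset.sum_congr rfl fun E _ => ?_
  have h : ∀ i, (if i ∈ E then z i • g i else f i)
      = (if i ∈ E then z i else 1) • (if i ∈ E then g i else f i) := fun i => by
    split_ifs <;> simp
  simp_rw [h, ordProd_smul, Finset.prod_ite_mem, Finset.univ_inter]

theorem exists_ordProd_eq_of_adjacent [Monoid R] {N : ℕ} (f : Fin N → R) {t₀ t₁ : Fin N}
    (h01 : (t₀ : ℕ) + 1 = t₁) :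
    ∃ L M : R, ∀ g : Fin N → R, (∀ u, u ≠ t₀ → u ≠ t₁ → g u = f u) →
      ordProd g = L * (g t₀ * g t₁) * M := by
  refine ⟨((List.ofFn f).take t₀).prod, ((List.ofFn f).drop (t₀ + 2)).prod, fun g hg => ?_⟩
  have hfar : ∀ u : Fin N, ((u : ℕ) < t₀ ∨ t₀ + 2 ≤ (u : ℕ)) → g u = f u := fun u hu =>
    hg u (fun h => by subst h; omega) (fun h => by subst h; omega)
  have htake : (List.ofFn g).take t₀ = (List.ofFn f).take t₀ :=
    List.ext_getElem (by simp) fun i h _ => by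
      simp only [List.length_take, List.length_ofFn] at h
      simpa using hfar ⟨i, by omega⟩ (Or.inl (by simp; omega))
  have hdrop : (List.ofFn g).drop (t₀ + 2) = (List.ofFn f).drop (t₀ + 2) :=
    List.ext_getElem (by simp) fun i h _ => by
      simp only [List.length_drop, List.length_ofFn] at h
      simpa using hfar ⟨t₀ + 2 + i, by omega⟩ (Or.inr (by simp))
  have hsplit : (List.ofFn g).drop t₀ = g t₀ :: g t₁ :: (List.ofFn g).drop (t₀ + 2) := by
    rw [List.drop_eq_getElem_cons (by simp), List.drop_eq_getElem_cons (by simp; omega)]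
    simp [show (⟨t₀ + 1, by omega⟩ : Fin N) = t₁ from Fin.ext h01]
  rw [ordProd, ← List.prod_take_mul_prod_drop _ t₀, hsplit, htake, ← hdrop]
  simp [mul_assoc]

theorem ordProd_comp_swap_of_adjacent [Monoid R] {K : Type*} [Monoid K] [MulAction K R]
    [IsScalarTower K R R] [SMulCommClass K R R] {N : ℕ} (f : Fin N → R) {t₀ t₁ : Fin N}
    (h01 : (t₀ : ℕ) + 1 = t₁) {z : K} (hz : f t₀ * f t₁ = z • (f t₁ * f t₀)) :
    ordProd f = z • ordProd (f ∘ Equiv.swap t₀ t₁) := by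
  obtain ⟨L, M, hLM⟩ := exists_ordProd_eq_of_adjacent f h01
  rw [hLM f fun _ _ _ => rfl, hLM _ fun u h0 h1 => by simp [Equiv.swap_apply_of_ne_of_ne h0 h1],
    hz, mul_smul_comm, smul_mul_assoc]
  simp

end OrderedProduct

theorem Fin.strictMono_of_adjacent {α : Type*} [Preorder α] {N : ℕ} {f : Fin N → α}
    (h : ∀ t₀ t₁ : Fin N, (t₀ : ℕ) + 1 = t₁ → f t₀ < f t₁) : StrictMono f := by
  cases N with
  | zero => exact fun x => x.elim0
  | succ N => exact Fin.strictMono_iff_lt_succ.2 fun i => h _ _ (by simp)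

theorem swap_lt_swap_iff_of_adjacent {N : ℕ} {t₀ t₁ u v : Fin N} (h01 : (t₀ : ℕ) + 1 = t₁)
    (h₀ : (u, v) ≠ (t₀, t₁)) (h₁ : (u, v) ≠ (t₁, t₀)) :
    Equiv.swap t₀ t₁ u < Equiv.swap t₀ t₁ v ↔ u < v := by
  have hval : ∀ x : Fin N, (Equiv.swap t₀ t₁ x : ℕ)
      = if (x : ℕ) = t₀ then t₁ else if (x : ℕ) = t₁ then t₀ else x := fun x => by
    rw [Equiv.swap_apply_def]; split_ifs <;> simp_all [Fin.ext_iff]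
  simp only [ne_eq, Prod.mk.injEq, Fin.ext_iff] at h₀ h₁
  rw [Fin.lt_def, Fin.lt_def, hval, hval]
  split_ifs <;> omega

theorem Equiv.Perm.sum_eq_sum_filter_add_mul_swap {β : Type*} [AddCommMonoid β] {N : ℕ}
    (F : Equiv.Perm (Fin N) → β) {t₀ t₁ : Fin N} (h : t₀ ≠ t₁) :
    ∑ σ, F σ = ∑ σ with σ t₀ < σ t₁, (F σ + F (σ * Equiv.swap t₀ t₁)) := by
  rw [Finset.sum_add_distrib, ← Finset.sum_filter_add_sum_filter_not _ fun σ => σ t₀ < σ t₁]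
  congr 1
  have hne : ∀ σ : Equiv.Perm (Fin N), σ t₁ ≠ σ t₀ := fun σ e => h (σ.injective e).symm
  refine Finset.sum_nbij' (· * Equiv.swap t₀ t₁) (· * Equiv.swap t₀ t₁) ?_ ?_ ?_ ?_ ?_
  all_goals simp
  · exact fun σ hσ => lt_of_le_of_ne hσ (hne σ)
  · exact fun σ hσ => hσ.le

theorem sum_ite_injective_eq_sum_perm {β : Type*} [AddCommMonoid β] {N : ℕ}
    (G : (Fin N → Fin N) → β) :
    ∑ w : Fin N → Fin N, (if Function.Injective w then G w else 0)
      = ∑ σ : Equiv.Perm (Fin N), G σ := by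
  rw [← Finset.sum_filter]
  refine (Finset.sum_bij (fun (σ : Equiv.Perm (Fin N)) _ => (⇑σ : Fin N → Fin N))
    (fun σ _ => by simpa using σ.injective)
    (fun _ _ _ _ h => Equiv.ext (congrFun h)) (fun w hw => ?_) fun _ _ => rfl).symm
  exact ⟨Equiv.ofBijective w (Finite.injective_iff_bijective.1 (by simpa using hw)),
    Finset.mem_univ _, rfl⟩

section InversionWeight

variable {α M : Type*} [CommMonoid M] {N : ℕ}

def invPairs (Q : α → α → Prop) (m : Fin N → α) : Finset (Fin N × Fin N) :=
  {ij | ij.1 < ij.2 ∧ Q (m ij.1) (m ij.2)}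

def invWeight (Q : α → α → Prop) (G : α → α → M) (m : Fin N → α) : M :=
  ∏ ij ∈ invPairs Q m, G (m ij.1) (m ij.2)

theorem mem_invPairs {Q : α → α → Prop} {m : Fin N → α} {ij : Fin N × Fin N} :
    ij ∈ invPairs Q m ↔ ij.1 < ij.2 ∧ Q (m ij.1) (m ij.2) := by
  simp [invPairs]

theorem invWeight_eq_one {Q : α → α → Prop} (G : α → α → M) {m : Fin N → α}
    (h : ∀ i j, i < j → ¬ Q (m i) (m j)) : invWeight Q G m = 1 :=
  Finset.prod_eq_one fun _ hij => absurd (mem_invPairs.1 hij).2 (h _ _ (mem_invPairs.1 hij).1)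

theorem invPairs_comp_swap {Q : α → α → Prop} {m : Fin N → α} {t₀ t₁ : Fin N}
    (h01 : (t₀ : ℕ) + 1 = t₁) (h₁ : ¬ Q (m t₀) (m t₁)) (h₂ : Q (m t₁) (m t₀)) :
    invPairs Q (m ∘ Equiv.swap t₀ t₁) = insert (t₀, t₁)
      ((invPairs Q m).map ((Equiv.swap t₀ t₁).prodCongr (Equiv.swap t₀ t₁)).toEmbedding) := by
  have hlt : t₀ < t₁ := Fin.lt_def.2 (by omega)
  ext ⟨u, v⟩
  simp only [Finset.mem_insert, Finset.mem_map_equiv, mem_invPairs, Equiv.prodCongr_symm,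
    Equiv.symm_swap, Equiv.prodCongr_apply, Prod.map, Function.comp_apply]
  by_cases e₀ : (u, v) = (t₀, t₁)
  · simp_all [Prod.ext_iff]
  by_cases e₁ : (u, v) = (t₁, t₀)
  · simp_all [Prod.ext_iff, hlt.not_gt]
  rw [swap_lt_swap_iff_of_adjacent h01 e₀ e₁]
  simp [e₀]

theorem notMem_map_invPairs_of_adjacent {Q : α → α → Prop} {m : Fin N → α} {t₀ t₁ : Fin N}
    (h01 : (t₀ : ℕ) + 1 = t₁) :
    (t₀, t₁) ∉ (invPairs Q m).map ((Equiv.swap t₀ t₁).prodCongr (Equiv.swap t₀ t₁)).toEmbedding := by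
  simp only [Finset.mem_map_equiv, mem_invPairs, Equiv.prodCongr_symm, Equiv.symm_swap,
    Equiv.prodCongr_apply, Prod.map, Equiv.swap_apply_left, Equiv.swap_apply_right]
  exact fun h => absurd h.1 (by rw [Fin.lt_def]; omega)

theorem invWeight_comp_swap {Q : α → α → Prop} (G : α → α → M) {m : Fin N → α}
    {t₀ t₁ : Fin N} (h01 : (t₀ : ℕ) + 1 = t₁) (h₁ : ¬ Q (m t₀) (m t₁)) (h₂ : Q (m t₁) (m t₀)) :
    invWeight Q G (m ∘ Equiv.swap t₀ t₁) = G (m t₁) (m t₀) * invWeight Q G m := by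
  rw [invWeight, invPairs_comp_swap h01 h₁ h₂,
    Finset.prod_insert (notMem_map_invPairs_of_adjacent h01), Finset.prod_map]
  simp [invWeight]

theorem card_invPairs_comp_swap {Q : α → α → Prop} {m : Fin N → α}
    {t₀ t₁ : Fin N} (h01 : (t₀ : ℕ) + 1 = t₁) (h₁ : ¬ Q (m t₀) (m t₁)) (h₂ : Q (m t₁) (m t₀)) :
    (invPairs Q (m ∘ Equiv.swap t₀ t₁)).card = (invPairs Q m).card + 1 := by
  rw [invPairs_comp_swap h01 h₁ h₂, Finset.card_insert_of_notMem
    (notMem_map_invPairs_of_adjacent h01), Finset.card_map]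

end InversionWeight

namespace IsQuantumMatrix

variable {R : Type*} [Ring R] [Algebra ℂ R] {N : ℕ} {lam : ℂ} {p q : Fin N → Fin N → ℂ}
  {a : Fin N → Fin N → R} {i j k l : Fin N}

theorem cross_relation_q (hpq : ParamConds p q) (ha : IsQuantumMatrix p q a) (hij : i < j) (hkl : k < l) :
    q i j • (a i k * a j l) - q k l • (a j l * a i k)
      = (q i j * q k l) • (a i l * a j k) - a j k * a i l := by
  have h := congrArg (q i j • ·) (ha.2.2.1 i j k l hij hkl)
  simpa only [smul_sub, smul_smul, mul_div_cancel₀ _ (hpq.1 i j).2,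
    mul_inv_cancel₀ (hpq.1 i j).2, one_smul] using h

theorem cross_relation_p (hpq : ParamConds p q) (ha : IsQuantumMatrix p q a) (hij : i < j) (hkl : k < l) :
    p k l • (a i k * a j l) - p i j • (a j l * a i k)
      = (p k l * p i j) • (a j k * a i l) - a i l * a j k := by
  have h := congrArg (p k l • ·) (ha.2.2.2 i j k l hij hkl)
  simpa only [smul_sub, smul_smul, mul_div_cancel₀ _ (hpq.1 k l).1,
    mul_inv_cancel₀ (hpq.1 k l).1, one_smul] using h

theorem row_swap (hpq : ParamConds p q) (ha : IsQuantumMatrix p q a) (hij : i < j) (hkl : k < l) :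
    a j k * a i l - q k l • (a j l * a i k)
      = -q i j • (a i k * a j l - q k l • (a i l * a j k)) := by
  linear_combination (norm := module) ha.cross_relation_q hpq hij hkl

theorem col_swap (hpq : ParamConds p q) (ha : IsQuantumMatrix p q a) (hij : i < j) (hkl : k < l) :
    a i l * a j k - p i j • (a j l * a i k)
      = -p k l • (a i k * a j l - p i j • (a j k * a i l)) := by
  linear_combination (norm := module) ha.cross_relation_p hpq hij hkl

/-- The two cross relations combine to `(λ + 1) q_{ij} a_{il} a_{jk} = (λ + 1) p_{kl} a_{jk} a_{il}`,
which is where `λ ≠ -1` enters. -/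
theorem antidiag_comm (hlam : lam ≠ -1) (hpq : ParamConds p q) (hpl : PLambdaCond p q lam)
    (ha : IsQuantumMatrix p q a) (hij : i < j) (hkl : k < l) :
    a i l * a j k = ((q i j)⁻¹ * p k l) • (a j k * a i l) := by
  have hq := (hpq.1 i j).2
  have key : (lam + 1) • (q i j • (a i l * a j k))
      = (lam + 1) • (q i j • (((q i j)⁻¹ * p k l) • (a j k * a i l))) := by
    rw [smul_smul (q i j), ← mul_assoc, mul_inv_cancel₀ hq, one_mul]
    linear_combination (norm := module) -p k l • ha.cross_relation_q hpq hij hkl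
      + q i j • ha.cross_relation_p hpq hij hkl
      + (hpl i j hij) • (p k l • (a j k * a i l) + a j l * a i k)
      - (hpl k l hkl) • (q i j • (a i l * a j k) + a j l * a i k)
  exact smul_right_injective R hq (smul_right_injective R (by grind) key)

theorem antidiag_comm_smul (hlam : lam ≠ -1) (hpq : ParamConds p q) (hpl : PLambdaCond p q lam)
    (ha : IsQuantumMatrix p q a) (hij : i < j) (hkl : k < l) :
    q k l • (a i l * a j k) = p i j • (a j k * a i l) := by
  rw [ha.antidiag_comm hlam hpq hpl hij hkl, smul_smul]
  congr 1
  have hij' := hpl i j hij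
  have hkl' := hpl k l hkl
  field_simp [(hpq.1 i j).2]
  linear_combination hkl' - hij'

end IsQuantumMatrix

section ColumnWord

variable {R : Type*} [Ring R] [Algebra ℂ R] {N : ℕ} {p q : Fin N → Fin N → ℂ}
  {a : Fin N → Fin N → R}

def wordSign (p : Fin N → Fin N → ℂ) (w : Fin N → Fin N) : ℂ :=
  invWeight (fun x y => y < x) (fun x y => -p y x) w

theorem qSign_id_eq_wordSign (σ : Equiv.Perm (Fin N)) : qSign p id σ = wordSign p σ := by
  simp [qSign, wordSign, invWeight, invPairs]

theorem wordSign_comp_swap {w : Fin N → Fin N} {t₀ t₁ : Fin N} (h01 : (t₀ : ℕ) + 1 = t₁)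
    (h : w t₀ < w t₁) : wordSign p (w ∘ Equiv.swap t₀ t₁) = -p (w t₀) (w t₁) * wordSign p w :=
  invWeight_comp_swap _ h01 (lt_asymm h) h

theorem wordSign_of_strictMono {w : Fin N → Fin N} (hw : StrictMono w) : wordSign p w = 1 :=
  invWeight_eq_one _ fun _ _ hij => (hw hij).not_gt

def colWordDet (p : Fin N → Fin N → ℂ) (a : Fin N → Fin N → R) (w : Fin N → Fin N) : R :=
  ∑ σ : Equiv.Perm (Fin N), wordSign p σ • ordProd (fun t => a (σ t) (w t))

theorem colWordDet_id : colWordDet p a id = cdet p a := by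
  simp [colWordDet, cdet, qSign_id_eq_wordSign]

theorem exists_smul_ordProd_add_mul_swap_eq (σ : Equiv.Perm (Fin N)) {t₀ t₁ : Fin N}
    (h01 : (t₀ : ℕ) + 1 = t₁) (hσ : σ t₀ < σ t₁) (w : Fin N → Fin N) :
    ∃ L M : R, ∀ w' : Fin N → Fin N, (∀ u, u ≠ t₀ → u ≠ t₁ → w' u = w u) →
      wordSign p σ • ordProd (fun t => a (σ t) (w' t))
        + wordSign p ⇑(σ * Equiv.swap t₀ t₁)
          • ordProd (fun t => a ((σ * Equiv.swap t₀ t₁) t) (w' t))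
      = wordSign p σ • (L * (a (σ t₀) (w' t₀) * a (σ t₁) (w' t₁)
          - p (σ t₀) (σ t₁) • (a (σ t₁) (w' t₀) * a (σ t₀) (w' t₁))) * M) := by
  obtain ⟨L, M, hLM⟩ := exists_ordProd_eq_of_adjacent (fun t => a (σ t) (w t)) h01
  refine ⟨L, M, fun w' hw' => ?_⟩
  rw [hLM _ fun u h₀ h₁ => by rw [hw' u h₀ h₁],
    hLM _ fun u h₀ h₁ => by simp [Equiv.swap_apply_of_ne_of_ne h₀ h₁, hw' u h₀ h₁],
    Equiv.Perm.coe_mul, wordSign_comp_swap h01 hσ]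
  simp only [Function.comp_apply, Equiv.swap_apply_left, Equiv.swap_apply_right]
  rw [mul_sub, sub_mul, smul_sub, mul_smul_comm, smul_mul_assoc, smul_smul, mul_comm, mul_neg,
    neg_smul, ← sub_eq_add_neg]

theorem colWordDet_eq_zero_of_eq (ha : IsQuantumMatrix p q a) {w : Fin N → Fin N}
    {t₀ t₁ : Fin N} (h01 : (t₀ : ℕ) + 1 = t₁) (hw : w t₀ = w t₁) : colWordDet p a w = 0 := by
  have hne : t₀ ≠ t₁ := fun h => by subst h; omega
  rw [colWordDet, Equiv.Perm.sum_eq_sum_filter_add_mul_swap _ hne]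
  refine Finset.sum_eq_zero fun σ hσ => ?_
  have hσ := (Finset.mem_filter.1 hσ).2
  obtain ⟨L, M, hLM⟩ := exists_smul_ordProd_add_mul_swap_eq (p := p) (a := a) σ h01 hσ w
  rw [hLM w fun _ _ _ => rfl, hw, ha.2.1 _ _ _ hσ, sub_self, mul_zero, zero_mul, smul_zero]

theorem colWordDet_eq_smul_comp_swap (hpq : ParamConds p q) (ha : IsQuantumMatrix p q a)
    {w : Fin N → Fin N} {t₀ t₁ : Fin N} (h01 : (t₀ : ℕ) + 1 = t₁) (hw : w t₁ < w t₀) :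
    colWordDet p a w = -p (w t₁) (w t₀) • colWordDet p a (w ∘ Equiv.swap t₀ t₁) := by
  have hne : t₀ ≠ t₁ := fun h => by subst h; omega
  rw [colWordDet, colWordDet, Equiv.Perm.sum_eq_sum_filter_add_mul_swap _ hne,
    Equiv.Perm.sum_eq_sum_filter_add_mul_swap _ hne, Finset.smul_sum]
  refine Finset.sum_congr rfl fun σ hσ => ?_
  have hσ := (Finset.mem_filter.1 hσ).2
  obtain ⟨L, M, hLM⟩ := exists_smul_ordProd_add_mul_swap_eq (p := p) (a := a) σ h01 hσ w
  rw [hLM w fun _ _ _ => rfl, hLM (w ∘ Equiv.swap t₀ t₁)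
    fun u h₀ h₁ => by simp [Equiv.swap_apply_of_ne_of_ne h₀ h₁]]
  simp only [Function.comp_apply, Equiv.swap_apply_left, Equiv.swap_apply_right]
  rw [ha.col_swap hpq hσ hw, smul_comm (-p (w t₁) (w t₀)), mul_smul_comm, smul_mul_assoc]

theorem colWordDet_eq (hpq : ParamConds p q) (ha : IsQuantumMatrix p q a) (w : Fin N → Fin N) :
    colWordDet p a w = if Function.Injective w then wordSign p w • cdet p a else 0 := by
  induction hK : (invPairs (fun x y => y ≤ x) w).card using Nat.strong_induction_on
    generalizing w with
  | _ d ih =>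
  by_cases hadj : ∃ t₀ t₁ : Fin N, (t₀ : ℕ) + 1 = t₁ ∧ w t₁ ≤ w t₀
  · obtain ⟨t₀, t₁, h01, hle⟩ := hadj
    have hne : t₀ ≠ t₁ := fun h => by subst h; omega
    rcases hle.eq_or_lt with heq | hlt
    · rw [colWordDet_eq_zero_of_eq ha h01 heq.symm, if_neg fun hinj => hne (hinj heq.symm)]
    · set s := Equiv.swap t₀ t₁
      have hss : w ∘ s ∘ s = w := by ext; simp [s]
      have hcard := card_invPairs_comp_swap (Q := fun x y : Fin N => y ≤ x) (m := w ∘ s) h01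
        (by simpa [s] using hlt) (by simpa [s] using hlt.le)
      rw [Function.comp_assoc, hss] at hcard
      rw [colWordDet_eq_smul_comp_swap hpq ha h01 hlt, ih _ (by omega) (w ∘ s) rfl]
      have hsign := wordSign_comp_swap (p := p) (w := w ∘ s) h01 (by simpa [s] using hlt)
      rw [Function.comp_assoc, hss] at hsign
      simp only [s.injective_comp]
      split_ifs
      · rw [hsign, smul_smul]
        simp [s]
      · rw [smul_zero]
  · push Not at hadj
    rw [(Fin.strictMono_of_adjacent hadj).eq_id, if_pos Function.injective_id,
      wordSign_of_strictMono strictMono_id, one_smul, colWordDet_id]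

end ColumnWord

section Sorting

variable {R K : Type*} [Monoid R] [CommMonoid K] [MulAction K R] [IsScalarTower K R R]
  [SMulCommClass K R R] {N : ℕ}

/-- Bubble sort; the hypothesis on `ρ` is the invariant ensuring that every adjacent pair to be
swapped is still in increasing index order, so that `hX` applies to it. -/
theorem ordProd_comp_eq_invWeight_smul {X : Fin N → R} (κ : Equiv.Perm (Fin N))
    (c : Fin N → Fin N → K) (hX : ∀ u v, u < v → κ v < κ u → X u * X v = c u v • (X v * X u))
    (ρ : Equiv.Perm (Fin N)) (hρ : ∀ u v, u < v → ρ v < ρ u → κ (ρ u) < κ (ρ v)) :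
    ordProd (X ∘ ρ) = invWeight (fun x y => κ y < κ x) c ρ • ordProd (X ∘ κ.symm) := by
  induction hK : (invPairs (fun x y => κ y < κ x) ρ).card using Nat.strong_induction_on
    generalizing ρ with
  | _ d ih =>
  by_cases hadj : ∃ t₀ t₁ : Fin N, (t₀ : ℕ) + 1 = t₁ ∧ κ (ρ t₁) < κ (ρ t₀)
  · obtain ⟨t₀, t₁, h01, hdesc⟩ := hadj
    have hlt : t₀ < t₁ := Fin.lt_def.2 (by omega)
    have hrow : ρ t₀ < ρ t₁ := (lt_or_gt_of_ne fun h => hlt.ne (ρ.injective h)).resolve_right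
      fun h => (hρ _ _ hlt h).not_gt hdesc
    set s := Equiv.swap t₀ t₁
    have hss : ⇑(ρ * s) ∘ s = ρ := by ext; simp [s]
    have hρs : ∀ u v, u < v → (ρ * s) v < (ρ * s) u → κ ((ρ * s) u) < κ ((ρ * s) v) := by
      intro u v huv h
      by_cases e : (u, v) = (t₀, t₁)
      · simp_all [s]
      exact hρ _ _ ((swap_lt_swap_iff_of_adjacent h01 e
        fun e' => by simp_all [Prod.ext_iff, hlt.not_gt]).2 huv) h
    have hQ₁ : ¬ κ ((ρ * s) t₁) < κ ((ρ * s) t₀) := by simpa [s] using hdesc.le.not_gt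
    have hQ₂ : κ ((ρ * s) t₀) < κ ((ρ * s) t₁) := by simpa [s] using hdesc
    have hcard := card_invPairs_comp_swap (Q := fun x y => κ y < κ x) h01 hQ₁ hQ₂
    have hweight := invWeight_comp_swap (Q := fun x y => κ y < κ x) c h01 hQ₁ hQ₂
    rw [hss] at hcard hweight
    rw [ordProd_comp_swap_of_adjacent _ h01 (hX (ρ t₀) (ρ t₁) hrow hdesc), Function.comp_assoc,
      ← Equiv.Perm.coe_mul, ih _ (by omega) (ρ * s) hρs rfl, smul_smul, hweight]
    simp [s]
  · push Not at hadj
    have hκρ : ∀ t, κ (ρ t) = t := congrFun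
      (Fin.strictMono_of_adjacent fun t₀ t₁ h01 => lt_of_le_of_ne (hadj t₀ t₁ h01)
        fun h => by have := ρ.injective (κ.injective h); omega).eq_id
    have hρκ : ⇑ρ = κ.symm := funext fun t => κ.injective (by simp [hκρ])
    rw [invWeight_eq_one _ fun i j hij h => by rw [hκρ, hκρ] at h; exact h.not_gt hij,
      one_smul, hρκ]

end Sorting

section RowColumn

variable {R : Type*} [Ring R] [Algebra ℂ R] {N : ℕ} {lam : ℂ} {p q : Fin N → Fin N → ℂ}
  {a : Fin N → Fin N → R}

theorem qSign_id_inv (σ : Equiv.Perm (Fin N)) :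
    qSign p id σ⁻¹ = ∏ ij ∈ invPairs (fun x y => y < x) σ, -p ij.1 ij.2 := by
  rw [qSign_id_eq_wordSign, wordSign, invWeight]
  refine Finset.prod_nbij' (fun ij => (σ⁻¹ ij.2, σ⁻¹ ij.1)) (fun ij => (σ ij.2, σ ij.1))
    ?_ ?_ ?_ ?_ ?_ <;> simp +contextual [mem_invPairs]

theorem qSign_smul_ordProd_row_eq (hlam : lam ≠ -1) (hpq : ParamConds p q)
    (hpl : PLambdaCond p q lam) (ha : IsQuantumMatrix p q a) (σ : Equiv.Perm (Fin N)) :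
    qSign q id σ • ordProd (fun i => a i (σ i))
      = qSign p id σ⁻¹ • ordProd (fun j => a (σ⁻¹ j) j) := by
  have hsort := ordProd_comp_eq_invWeight_smul (X := fun i => a i (σ i)) σ
    (fun u v => (q u v)⁻¹ * p (σ v) (σ u)) (fun u v huv h => ha.antidiag_comm hlam hpq hpl huv h)
    1 fun u v huv h => absurd h huv.not_gt
  simp only [Equiv.Perm.coe_one, Function.comp_id] at hsort
  have hpairs : invPairs (fun x y => σ y < σ x) id = invPairs (fun x y => y < x) σ := by
    ext; simp [mem_invPairs]
  rw [hsort, smul_smul, qSign_id_inv, qSign_id_eq_wordSign, wordSign, invWeight, invWeight,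
    hpairs, ← Finset.prod_mul_distrib]
  refine congrArg₂ (· • ·) (Finset.prod_congr rfl fun ij hij => ?_) (by simp [Function.comp_def])
  obtain ⟨hlt, hdesc⟩ := mem_invPairs.1 hij
  have e₁ := hpl _ _ hlt
  have e₂ := hpl _ _ hdesc
  field_simp [(hpq.1 ij.1 ij.2).2]
  simp only [id_eq]
  linear_combination e₁ - e₂

theorem cdet_eq_rdet (hlam : lam ≠ -1) (hpq : ParamConds p q) (hpl : PLambdaCond p q lam)
    (ha : IsQuantumMatrix p q a) : cdet p a = rdet q a := by
  rw [rdet, cdet]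
  simp_rw [qSign_smul_ordProd_row_eq hlam hpq hpl ha]
  exact (Equiv.sum_comp (Equiv.inv _) fun σ => qSign p id σ • ordProd fun j => a (σ j) j).symm

end RowColumn

section PairFlips

variable {n : ℕ}

theorem pfIdx1_ne_pfIdx2 (i j : Fin n) : pfIdx1 i ≠ pfIdx2 j := by
  simp [pfIdx1, pfIdx2, Fin.ext_iff]; omega

@[simp] theorem pfIdx1_inj {i j : Fin n} : pfIdx1 i = pfIdx1 j ↔ i = j := by
  simp [pfIdx1, Fin.ext_iff]

@[simp] theorem pfIdx2_inj {i j : Fin n} : pfIdx2 i = pfIdx2 j ↔ i = j := by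
  simp [pfIdx2, Fin.ext_iff]

theorem Fin.forall_pfIdx {P : Fin (2 * n) → Prop} (h₁ : ∀ i, P (pfIdx1 i))
    (h₂ : ∀ i, P (pfIdx2 i)) (t : Fin (2 * n)) : P t := by
  obtain ⟨k, hk⟩ := t
  rcases Nat.even_or_odd' k with ⟨i, rfl | rfl⟩
  · exact h₁ ⟨i, by omega⟩
  · exact h₂ ⟨i, by omega⟩

def pairSwap (i : Fin n) : Equiv.Perm (Fin (2 * n)) := Equiv.swap (pfIdx1 i) (pfIdx2 i)

theorem pairSwap_commute {i j : Fin n} (h : i ≠ j) : Commute (pairSwap i) (pairSwap j) :=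
  (Equiv.Perm.disjoint_swap_swap (by
    simp [h, pfIdx1_ne_pfIdx2, (pfIdx1_ne_pfIdx2 _ _).symm])).commute

def flipPairs (E : Finset (Fin n)) : Equiv.Perm (Fin (2 * n)) :=
  E.noncommProd pairSwap fun _ _ _ _ h => pairSwap_commute h

theorem flipPairs_empty : flipPairs (∅ : Finset (Fin n)) = 1 := Finset.noncommProd_empty _ _

theorem flipPairs_insert {i : Fin n} {E : Finset (Fin n)} (hi : i ∉ E) :
    flipPairs (insert i E) = pairSwap i * flipPairs E :=
  Finset.noncommProd_insert_of_notMem _ _ _ _ hi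

theorem flipPairs_apply (E : Finset (Fin n)) (j : Fin n) :
    flipPairs E (pfIdx1 j) = (if j ∈ E then pfIdx2 j else pfIdx1 j) ∧
      flipPairs E (pfIdx2 j) = (if j ∈ E then pfIdx1 j else pfIdx2 j) := by
  induction E using Finset.induction_on with
  | empty => simp [flipPairs_empty]
  | insert i E hi ih =>
    rw [flipPairs_insert hi, Equiv.Perm.mul_apply, Equiv.Perm.mul_apply, ih.1, ih.2]
    by_cases hj : j = i
    · subst hj
      simp [hi, pairSwap]
    · split_ifs <;> simp_all [pairSwap, Equiv.swap_apply_of_ne_of_ne, pfIdx1_ne_pfIdx2,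
        (pfIdx1_ne_pfIdx2 _ _).symm]

@[simp] theorem flipPairs_apply_pfIdx1 (E : Finset (Fin n)) (j : Fin n) :
    flipPairs E (pfIdx1 j) = if j ∈ E then pfIdx2 j else pfIdx1 j :=
  (flipPairs_apply E j).1

@[simp] theorem flipPairs_apply_pfIdx2 (E : Finset (Fin n)) (j : Fin n) :
    flipPairs E (pfIdx2 j) = if j ∈ E then pfIdx1 j else pfIdx2 j :=
  (flipPairs_apply E j).2

theorem flipPairs_mul_self (E : Finset (Fin n)) : flipPairs E * flipPairs E = 1 :=
  Equiv.ext <| Fin.forall_pfIdx (fun j => by by_cases hj : j ∈ E <;> simp [hj])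
    (fun j => by by_cases hj : j ∈ E <;> simp [hj])

end PairFlips

section PfaffianExpansion

variable {n : ℕ}

def pfPerms (n : ℕ) : Finset (Equiv.Perm (Fin (2 * n))) :=
  {σ | ∀ i, σ (pfIdx1 i) < σ (pfIdx2 i)}

theorem mem_pfPerms {σ : Equiv.Perm (Fin (2 * n))} :
    σ ∈ pfPerms n ↔ ∀ i, σ (pfIdx1 i) < σ (pfIdx2 i) := by
  simp [pfPerms]

/-- Every permutation is uniquely `σ * flipPairs E` with `σ ∈ pfPerms n`, where `E` is the set
of pairs it puts in decreasing order. -/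
theorem sum_perm_eq_sum_pfPerms_flipPairs {β : Type*} [AddCommMonoid β]
    (F : Equiv.Perm (Fin (2 * n)) → β) :
    ∑ σ, F σ = ∑ σ ∈ pfPerms n, ∑ E, F (σ * flipPairs E) := by
  have hne : ∀ (σ : Equiv.Perm (Fin (2 * n))) i, σ (pfIdx2 i) ≠ σ (pfIdx1 i) :=
    fun σ i h => pfIdx1_ne_pfIdx2 i i (σ.injective h).symm
  let desc : Equiv.Perm (Fin (2 * n)) → Finset (Fin n) := fun σ => {i | σ (pfIdx2 i) < σ (pfIdx1 i)}
  rw [← Finset.sum_product']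
  refine (Finset.sum_nbij' (fun σE => σE.1 * flipPairs σE.2)
    (fun σ => (σ * flipPairs (desc σ), desc σ)) ?_ ?_ ?_ ?_ ?_).symm
  · simp
  · intro σ _
    simp only [Finset.mem_product, mem_pfPerms, Finset.mem_univ, and_true, Equiv.Perm.mul_apply,
      flipPairs_apply_pfIdx1, flipPairs_apply_pfIdx2]
    intro i
    by_cases hi : i ∈ desc σ
    · have h : σ (pfIdx2 i) < σ (pfIdx1 i) := by simpa [desc] using hi
      simpa [hi] using h
    · have h : σ (pfIdx1 i) < σ (pfIdx2 i) :=
        lt_of_le_of_ne (not_lt.1 (by simpa [desc] using hi)) (hne σ i).symm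
      simpa [hi] using h
  · rintro ⟨σ, E⟩ hσE
    have hσ := mem_pfPerms.1 (Finset.mem_product.1 hσE).1
    have hdesc : desc (σ * flipPairs E) = E := by
      ext i
      by_cases hi : i ∈ E <;> simp [desc, hi, hσ i, (hσ i).le.not_gt]
    simp [hdesc, mul_assoc, flipPairs_mul_self]
  · intro σ _
    simp [mul_assoc, flipPairs_mul_self]
  · intro _ _
    rfl

theorem wordSign_mul_flipPairs (p : Fin (2 * n) → Fin (2 * n) → ℂ) {σ : Equiv.Perm (Fin (2 * n))}
    (hσ : σ ∈ pfPerms n) (E : Finset (Fin n)) :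
    wordSign p ⇑(σ * flipPairs E)
      = (∏ i ∈ E, -p (σ (pfIdx1 i)) (σ (pfIdx2 i))) * wordSign p σ := by
  induction E using Finset.induction_on with
  | empty => simp [flipPairs_empty]
  | insert i E hi ih =>
    have hcomm : Commute (pairSwap i) (flipPairs E) :=
      Finset.noncommProd_commute _ _ _ _ fun j hj => pairSwap_commute fun h => hi (h ▸ hj)
    have hlt : (σ * flipPairs E) (pfIdx1 i) < (σ * flipPairs E) (pfIdx2 i) := by
      simpa [hi] using mem_pfPerms.1 hσ i
    rw [flipPairs_insert hi, hcomm.eq, ← mul_assoc, Equiv.Perm.coe_mul _ (pairSwap i), pairSwap,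
      wordSign_comp_swap rfl hlt, ih, Finset.prod_insert hi]
    simp [hi, mul_assoc]

/-- `pairWord φ = (φ 0).1 (φ 0).2 (φ 1).1 (φ 1).2 ⋯`. -/
def pairWord {α : Type*} : (Fin n → α × α) ≃ (Fin (2 * n) → α) where
  toFun φ t := if (t : ℕ) % 2 = 0 then (φ ⟨t / 2, by omega⟩).1 else (φ ⟨t / 2, by omega⟩).2
  invFun w i := (w (pfIdx1 i), w (pfIdx2 i))
  left_inv φ := by
    ext i
    · simp [pfIdx1]
    · simp [pfIdx2, Nat.mul_add_div]
  right_inv w := funext <| Fin.forall_pfIdx (fun i => by simp [pfIdx1])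
    (fun i => by simp [pfIdx2, Nat.mul_add_div])

@[simp] theorem pairWord_apply_pfIdx1 {α : Type*} (φ : Fin n → α × α) (i : Fin n) :
    pairWord φ (pfIdx1 i) = (φ i).1 :=
  congrArg Prod.fst (congrFun (pairWord.symm_apply_apply φ) i)

@[simp] theorem pairWord_apply_pfIdx2 {α : Type*} (φ : Fin n → α × α) (i : Fin n) :
    pairWord φ (pfIdx2 i) = (φ i).2 :=
  congrArg Prod.snd (congrFun (pairWord.symm_apply_apply φ) i)

@[simp] theorem pairWord_symm_apply {α : Type*} (w : Fin (2 * n) → α) (i : Fin n) :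
    pairWord.symm w i = (w (pfIdx1 i), w (pfIdx2 i)) := rfl

variable {R : Type*} [Ring R] [Algebra ℂ R] {p : Fin (2 * n) → Fin (2 * n) → ℂ}
  {a : Fin (2 * n) → Fin (2 * n) → R}

/-- Expanding each factor `a a - p a a` and merging the sign of a flip into `σ` yields all
terms `σ * flipPairs E` of the column word determinant, each exactly once. -/
theorem sum_pfPerms_smul_ordProd_eq_colWordDet (φ : Fin n → Fin (2 * n) × Fin (2 * n)) :
    ∑ σ ∈ pfPerms n, wordSign p σ • ordProd (fun i =>
        a (σ (pfIdx1 i)) (φ i).1 * a (σ (pfIdx2 i)) (φ i).2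
          - p (σ (pfIdx1 i)) (σ (pfIdx2 i)) • (a (σ (pfIdx2 i)) (φ i).1 * a (σ (pfIdx1 i)) (φ i).2))
      = colWordDet p a (pairWord φ) := by
  rw [colWordDet, sum_perm_eq_sum_pfPerms_flipPairs]
  refine Finset.sum_congr rfl fun σ hσ => ?_
  simp_rw [sub_eq_add_neg, ← neg_smul, ordProd_add_smul, Finset.smul_sum]
  refine Finset.sum_congr rfl fun E _ => ?_
  rw [wordSign_mul_flipPairs p hσ, smul_smul, mul_comm, ← ordProd_pairs]
  congr 2
  ext i
  by_cases hi : i ∈ E <;> simp [hi]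

end PfaffianExpansion

section EntryFormulas

variable {R : Type*} [Ring R]

def upperPart {N : ℕ} (b : Fin N → Fin N → R) (k l : Fin N) : R := if k < l then b k l else 0

theorem commute_upperPart {N : ℕ} {a b : Fin N → Fin N → R}
    (hcomm : ∀ i j k l, Commute (b i j) (a k l)) (i j k l : Fin N) :
    Commute (upperPart b i j) (a k l) := by
  unfold upperPart
  split_ifs
  exacts [hcomm i j k l, Commute.zero_left _]

variable [Algebra ℂ R]

theorem Pf_eq_sum_pfPerms {n : ℕ} (q : Fin (2 * n) → Fin (2 * n) → ℂ)
    (b : Fin (2 * n) → Fin (2 * n) → R) :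
    Pf q b = ∑ σ ∈ pfPerms n, qSign q id σ • ordProd (fun i => b (σ (pfIdx1 i)) (σ (pfIdx2 i))) :=
  by simp [Pf, pfPerms]

theorem Pf_eq_sum_upperPart {n : ℕ} (q : Fin (2 * n) → Fin (2 * n) → ℂ)
    (b : Fin (2 * n) → Fin (2 * n) → R) :
    Pf q b = ∑ σ, qSign q id σ • ordProd (fun i => upperPart b (σ (pfIdx1 i)) (σ (pfIdx2 i))) := by
  rw [Pf_eq_sum_pfPerms, pfPerms, Finset.sum_filter]
  refine Finset.sum_congr rfl fun σ _ => ?_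
  split_ifs with hσ
  · simp [upperPart, hσ]
  · obtain ⟨i, hi⟩ := not_forall.1 hσ
    rw [ordProd_eq_zero i (if_neg hi), smul_zero]

variable {N : ℕ} {lam : ℂ} {p q : Fin N → Fin N → ℂ} {a b c : Fin N → Fin N → R}

theorem eq_upperPart_sub_smul_upperPart (hb0 : ∀ i, b i i = 0)
    (hbskew : ∀ i j : Fin N, i < j → b j i = -(q i j) • b i j) (k l : Fin N) :
    b k l = upperPart b k l - q l k • upperPart b l k := by
  rcases lt_trichotomy k l with h | rfl | h
  · simp [upperPart, h, h.not_gt]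
  · simp [upperPart, hb0]
  · simp [upperPart, h, h.not_gt, hbskew l k h]

theorem entry_eq_sum_upperPart (hb0 : ∀ i, b i i = 0)
    (hbskew : ∀ i j : Fin N, i < j → b j i = -(q i j) • b i j)
    (hcomm : ∀ i j k l, Commute (b i j) (a k l))
    (hc : ∀ i j, c i j = ∑ k, ∑ l, a i k * b k l * a j l) (u v : Fin N) :
    c u v = ∑ e : Fin N × Fin N,
      upperPart b e.1 e.2 * (a u e.1 * a v e.2 - q e.1 e.2 • (a u e.2 * a v e.1)) := by
  calc c u v = ∑ k, ∑ l, (upperPart b k l - q l k • upperPart b l k) * (a u k * a v l) := by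
        simp_rw [hc, ← eq_upperPart_sub_smul_upperPart hb0 hbskew, ← (hcomm _ _ _ _).eq,
          mul_assoc]
    _ = ∑ k, ∑ l, upperPart b k l * (a u k * a v l)
          - ∑ k, ∑ l, q k l • (upperPart b k l * (a u l * a v k)) := by
        rw [Finset.sum_comm (f := fun k l => q k l • _)]
        simp only [sub_mul, Finset.sum_sub_distrib, smul_mul_assoc]
    _ = _ := by
        simp only [Fintype.sum_prod_type, mul_sub, mul_smul_comm, Finset.sum_sub_distrib]

theorem entry_antisymm (hpq : ParamConds p q) (ha : IsQuantumMatrix p q a) (hb0 : ∀ i, b i i = 0)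
    (hbskew : ∀ i j : Fin N, i < j → b j i = -(q i j) • b i j)
    (hcomm : ∀ i j k l, Commute (b i j) (a k l))
    (hc : ∀ i j, c i j = ∑ k, ∑ l, a i k * b k l * a j l) {i j : Fin N} (hij : i < j) :
    c j i = -(q i j) • c i j := by
  rw [entry_eq_sum_upperPart hb0 hbskew hcomm hc, entry_eq_sum_upperPart hb0 hbskew hcomm hc,
    Finset.smul_sum]
  refine Finset.sum_congr rfl fun e _ => ?_
  by_cases he : e.1 < e.2
  · rw [ha.row_swap hpq hij he, mul_smul_comm]
  · simp [upperPart, he]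

theorem entry_eq_sum_upperPart_of_lt (hlam : lam ≠ -1) (hpq : ParamConds p q)
    (hpl : PLambdaCond p q lam) (ha : IsQuantumMatrix p q a) (hb0 : ∀ i, b i i = 0)
    (hbskew : ∀ i j : Fin N, i < j → b j i = -(q i j) • b i j)
    (hcomm : ∀ i j k l, Commute (b i j) (a k l))
    (hc : ∀ i j, c i j = ∑ k, ∑ l, a i k * b k l * a j l) {u v : Fin N} (huv : u < v) :
    c u v = ∑ e : Fin N × Fin N,
      upperPart b e.1 e.2 * (a u e.1 * a v e.2 - p u v • (a v e.1 * a u e.2)) := by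
  rw [entry_eq_sum_upperPart hb0 hbskew hcomm hc]
  refine Finset.sum_congr rfl fun e _ => ?_
  by_cases he : e.1 < e.2
  · rw [ha.antidiag_comm_smul hlam hpq hpl huv he]
  · simp [upperPart, he]

end EntryFormulas

section Transformation

variable {R : Type*} [Ring R] [Algebra ℂ R] {n : ℕ} {lam : ℂ}
  {p q : Fin (2 * n) → Fin (2 * n) → ℂ} {a b c : Fin (2 * n) → Fin (2 * n) → R}

theorem commute_Pf_cdet (hcomm : ∀ i j k l, Commute (b i j) (a k l)) :
    Commute (Pf p b) (cdet p a) :=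
  Commute.sum_left _ _ _ fun _ _ => .smul_left (.sum_right _ _ _ fun _ _ => .smul_right
    (commute_ordProd_right fun _ => (commute_ordProd_right fun _ => (hcomm _ _ _ _).symm).symm) _) _

theorem Pf_eq_sum_ordProd_upperPart_mul_colWordDet (hlam : lam ≠ -1) (hpq : ParamConds p q)
    (hpl : PLambdaCond p q lam) (ha : IsQuantumMatrix p q a) (hb0 : ∀ i, b i i = 0)
    (hbskew : ∀ i j : Fin (2 * n), i < j → b j i = -(q i j) • b i j)
    (hcomm : ∀ i j k l, Commute (b i j) (a k l))
    (hc : ∀ i j, c i j = ∑ k, ∑ l, a i k * b k l * a j l) :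
    Pf p c = ∑ φ : Fin n → Fin (2 * n) × Fin (2 * n),
      ordProd (fun i => upperPart b (φ i).1 (φ i).2) * colWordDet p a (pairWord φ) := by
  rw [Pf_eq_sum_pfPerms]
  have hexpand : ∀ σ ∈ pfPerms n, qSign p id σ • ordProd (fun i => c (σ (pfIdx1 i)) (σ (pfIdx2 i)))
      = ∑ φ : Fin n → Fin (2 * n) × Fin (2 * n),
        ordProd (fun i => upperPart b (φ i).1 (φ i).2) * (wordSign p σ • ordProd (fun i =>
          a (σ (pfIdx1 i)) (φ i).1 * a (σ (pfIdx2 i)) (φ i).2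
            - p (σ (pfIdx1 i)) (σ (pfIdx2 i))
              • (a (σ (pfIdx2 i)) (φ i).1 * a (σ (pfIdx1 i)) (φ i).2))) := fun σ hσ => by
    simp_rw [entry_eq_sum_upperPart_of_lt hlam hpq hpl ha hb0 hbskew hcomm hc
      (mem_pfPerms.1 hσ _), ordProd_sum, Finset.smul_sum]
    refine Finset.sum_congr rfl fun φ _ => ?_
    rw [ordProd_mul_distrib _ _ fun i j _ => ?_, mul_smul_comm, qSign_id_eq_wordSign]
    have := commute_upperPart hcomm (φ j).1 (φ j).2
    exact (((this _ _).mul_right (this _ _)).sub_right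
      (((this _ _).mul_right (this _ _)).smul_right _)).symm
  rw [Finset.sum_congr rfl hexpand, Finset.sum_comm]
  refine Finset.sum_congr rfl fun φ _ => ?_
  rw [← Finset.mul_sum, sum_pfPerms_smul_ordProd_eq_colWordDet]

theorem Pf_eq_rdet_mul_Pf (hlam : lam ≠ -1) (hpq : ParamConds p q)
    (hpl : PLambdaCond p q lam) (ha : IsQuantumMatrix p q a) (hb0 : ∀ i, b i i = 0)
    (hbskew : ∀ i j : Fin (2 * n), i < j → b j i = -(q i j) • b i j)
    (hcomm : ∀ i j k l, Commute (b i j) (a k l))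
    (hc : ∀ i j, c i j = ∑ k, ∑ l, a i k * b k l * a j l) :
    Pf p c = rdet q a * Pf p b := by
  rw [Pf_eq_sum_ordProd_upperPart_mul_colWordDet hlam hpq hpl ha hb0 hbskew hcomm hc,
    ← (pairWord (α := Fin (2 * n)) (n := n)).symm.sum_comp]
  simp only [Equiv.apply_symm_apply]
  simp_rw [colWordDet_eq hpq ha, mul_ite, mul_zero]
  rw [sum_ite_injective_eq_sum_perm]
  simp_rw [mul_smul_comm, ← smul_mul_assoc, ← Finset.sum_mul]
  rw [← cdet_eq_rdet hlam hpq hpl ha, ← (commute_Pf_cdet hcomm).eq, Pf_eq_sum_upperPart]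
  simp [qSign_id_eq_wordSign]

end Transformation

/-- The column analog of the Pfaffian transformation rule:
for `q`-antisymmetric `B` and `C = ABAᵀ`, `C` is `q`-antisymmetric and
`Pf_p(C) = det_q(A) Pf_p(B)`. -/
theorem pfaffian_transformation_column {R : Type*} [Ring R] [Algebra ℂ R]
    {n : ℕ} (lam : ℂ) (hlam : lam ≠ -1)
    (p q : Fin (2 * n) → Fin (2 * n) → ℂ)
    (hpq : ParamConds p q) (hpl : PLambdaCond p q lam)
    (a : Fin (2 * n) → Fin (2 * n) → R) (ha : IsQuantumMatrix p q a)
    (b : Fin (2 * n) → Fin (2 * n) → R)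
    (hb0 : ∀ i, b i i = 0)
    (hbskew : ∀ i j : Fin (2 * n), i < j → b j i = -(q i j) • b i j)
    (hcomm : ∀ i j k l, Commute (b i j) (a k l))
    (c : Fin (2 * n) → Fin (2 * n) → R)
    (hc : ∀ i j, c i j = ∑ k, ∑ l, a i k * b k l * a j l) :
    (∀ i j : Fin (2 * n), i < j → c j i = -(q i j) • c i j) ∧
    Pf p c = rdet q a * Pf p b :=
  ⟨fun _ _ hij => entry_antisymm hpq ha hb0 hbskew hcomm hc hij,
    Pf_eq_rdet_mul_Pf hlam hpq hpl ha hb0 hbskew hcomm hc⟩
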